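/- Let μ ∈ ℂ with μ ∉ {0, 1}, and set a = (μ+μ⁻¹)/2, b = i(μ⁻¹−μ)/2, regarded as quaternions in the real span of 1 and i. Let n ∈ ℍ with Re n = 0 and n² = −1, and let φ ∈ ℍ, φ ≠ 0. Then T := ½(n·φ·(a−1)·φ⁻¹ + φ·b·φ⁻¹) ≠ 0 (hence T is an invertible quaternion). (Nonvanishing of T in Theorems 5.1 and 5.2.) -/

import Mathlib

/-!
Conjugating by `φ`, the equation `T = 0` reads `m * (a - 1) + b = 0` with `m = φ⁻¹ * n * φ`,
again a square root of `-1`. Since `a - 1` and `b` commute, this forces `b² = -(a - 1)²`.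
But `a² + b² = 1`, so `b² + (a - 1)² = 2 - 2a = -(μ - 1)² / μ`, which vanishes only at `μ = 1`.
-/

noncomputable section
open Complex

local notation "ℍ" => Quaternion ℝ

/-- Embedding of ℂ into ℍ as the real span of 1 and i. -/
def cq (z : ℂ) : ℍ := ⟨z.re, z.im, 0, 0⟩

/-- a = (μ+μ⁻¹)/2. -/
def aμ (μ : ℂ) : ℂ := (μ + μ⁻¹) / 2

/-- b = i(μ⁻¹−μ)/2. -/
def bμ (μ : ℂ) : ℂ := Complex.I * (μ⁻¹ - μ) / 2

lemma cq_eq_ofComplex : cq = Quaternion.ofComplex := rfl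

lemma mul_self_eq_neg_mul_self_of_mul_add_eq_zero {R : Type*} [Ring R] {m x y : R}
    (hm : m * m = -1) (hxy : Commute x y) (h : m * x + y = 0) : y * y = -(x * x) := by
  have hy : y = -(m * x) := eq_neg_of_add_eq_zero_right h
  have hx : x * (m * x) = m * x * x := by
    rw [hy] at hxy
    simpa only [mul_neg, neg_mul, neg_inj] using hxy.eq
  calc y * y = m * (x * (m * x)) := by rw [hy, neg_mul_neg, mul_assoc]
    _ = -(x * x) := by rw [hx, ← mul_assoc, ← mul_assoc, hm, neg_one_mul, neg_mul]

lemma mul_self_eq_neg_mul_self_of_conj_add_conj_eq_zero {D : Type*} [DivisionRing D]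
    {n φ x y : D} (hn : n * n = -1) (hφ : φ ≠ 0) (hxy : Commute x y)
    (h : n * (φ * x * φ⁻¹) + φ * y * φ⁻¹ = 0) : y * y = -(x * x) := by
  refine mul_self_eq_neg_mul_self_of_mul_add_eq_zero (m := φ⁻¹ * n * φ) ?_ hxy ?_
  · calc φ⁻¹ * n * φ * (φ⁻¹ * n * φ) = φ⁻¹ * (n * n) * φ := by
          simp only [mul_assoc, mul_inv_cancel_left₀ hφ]
      _ = -1 := by rw [hn, mul_neg_one, neg_mul, inv_mul_cancel₀ hφ]
  · calc φ⁻¹ * n * φ * x + y = φ⁻¹ * (n * (φ * x * φ⁻¹) + φ * y * φ⁻¹) * φ := by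
          simp only [mul_add, add_mul, mul_assoc, inv_mul_cancel₀ hφ, mul_one,
            inv_mul_cancel_left₀ hφ]
      _ = 0 := by rw [h, mul_zero, zero_mul]

lemma bμ_mul_self_add_aμ_sub_one_mul_self {μ : ℂ} (hμ : μ ≠ 0) :
    bμ μ * bμ μ + (aμ μ - 1) * (aμ μ - 1) = -(μ - 1) ^ 2 / μ := by
  unfold aμ bμ
  field_simp
  linear_combination (1 - μ ^ 2) ^ 2 * Complex.I_sq

theorem stmt_5 (μ : ℂ) (hμ0 : μ ≠ 0) (hμ1 : μ ≠ 1)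
    (n : ℍ) (hsq : n * n = -1)
    (φ : ℍ) (hφ : φ ≠ 0) :
    (n * (φ * cq (aμ μ - 1) * φ⁻¹) + φ * cq (bμ μ) * φ⁻¹) / 2 ≠ 0 := by
  rw [div_ne_zero_iff, cq_eq_ofComplex]
  refine ⟨fun hT => ?_, Quaternion.coe_injective.ne two_ne_zero⟩
  have hsquares := mul_self_eq_neg_mul_self_of_conj_add_conj_eq_zero hsq hφ
    ((Commute.all _ _).map Quaternion.ofComplex) hT
  rw [← map_mul, ← map_mul, ← map_neg] at hsquares
  have hab := Quaternion.ofComplex.toRingHom.injective hsquares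
  rw [eq_neg_iff_add_eq_zero, bμ_mul_self_add_aμ_sub_one_mul_self hμ0] at hab
  exact div_ne_zero (neg_ne_zero.mpr (pow_ne_zero 2 (sub_ne_zero.mpr hμ1))) hμ0 hab
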